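/- arXiv:cs/9907036 — 2 statements merged into one kernel-verified Lean document; each statement's English description precedes it below -/
import Mathlib

section
/- In the election constructed from a 3DM instance (M,W,X,Y) with ||M|| > 1 and q = ||W||, if M contains a matching (a subset M' ⊆ M of size q whose triples are pairwise disjoint in every coordinate), then the Dodgson score of the distinguished candidate c is exactly 3q. -/
/-- A voter's preference order is a list of candidates in *increasing* order of
preference (the head is the least preferred, the last element the most preferred).
`prefers v x y` means voter `v` strictly prefers `x` to `y`. -/
def prefers {α : Type*} [DecidableEq α] (v : List α) (x y : α) : Prop :=
  v.idxOf y < v.idxOf x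

/-- The number of voters in the profile `V` preferring `x` to `y`. -/
def numPrefer {α : Type*} [DecidableEq α] (V : List (List α)) (x y : α) : ℕ :=
  (V.filter (fun v => decide (v.idxOf y < v.idxOf x))).length

/-- `c` is a Condorcet winner: strictly more than half of the voters prefer `c`
to each other candidate. -/
def CondorcetWinner {α : Type*} [DecidableEq α] (C : Finset α) (V : List (List α))
    (c : α) : Prop :=
  c ∈ C ∧ ∀ d ∈ C, d ≠ c → V.length < 2 * numPrefer V c d

/-- One switch in a single preference order: exchange two adjacent candidates. -/
def SwitchVoter {α : Type*} (v w : List α) : Prop :=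
  ∃ (l r : List α) (x y : α), v = l ++ x :: y :: r ∧ w = l ++ y :: x :: r

/-- One switch in a profile: exchange two adjacent candidates in one voter's order. -/
def SwitchProfile {α : Type*} (V W : List (List α)) : Prop :=
  ∃ (P Q : List (List α)) (v w : List α),
    V = P ++ v :: Q ∧ W = P ++ w :: Q ∧ SwitchVoter v w

/-- `Reach R k a b`: `b` is reachable from `a` in exactly `k` `R`-steps. -/
def Reach {β : Type*} (R : β → β → Prop) : ℕ → β → β → Prop
  | 0, a, b => a = b
  | k + 1, a, b => ∃ m, R a m ∧ Reach R k m b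

/-- The Dodgson score of candidate `c`: the minimum number of switches needed to
make `c` a Condorcet winner. -/
noncomputable def DodgsonScore {α : Type*} [DecidableEq α] (C : Finset α)
    (V : List (List α)) (c : α) : ℕ :=
  sInf {k | ∃ W, Reach SwitchProfile k V W ∧ CondorcetWinner C W c}

/-- `v` is a valid preference order on the candidate set `C`. -/
def IsVoter {α : Type*} [DecidableEq α] (C : Finset α) (v : List α) : Prop :=
  v.Nodup ∧ ∀ x, x ∈ v ↔ x ∈ C

/-- Validity of a 3DM instance `(M, Ws, Xs, Ys)` with `||M|| > 1`, together with
fresh, distinct candidates `c`, `s`, `t`. -/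
def TDMOK {α : Type*} [DecidableEq α] (Ws Xs Ys : Finset α)
    (M : List (α × α × α)) (c s t : α) : Prop :=
  Ws.Nonempty ∧ Xs.Nonempty ∧ Ys.Nonempty ∧
  Disjoint Ws Xs ∧ Disjoint Ws Ys ∧ Disjoint Xs Ys ∧
  Ws.card = Xs.card ∧ Ws.card = Ys.card ∧
  (∀ m ∈ M, m.1 ∈ Ws ∧ m.2.1 ∈ Xs ∧ m.2.2 ∈ Ys) ∧
  M.Nodup ∧ 1 < M.length ∧
  c ∉ Ws ∪ Xs ∪ Ys ∧ s ∉ Ws ∪ Xs ∪ Ys ∧ t ∉ Ws ∪ Xs ∪ Ys ∧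
  c ≠ s ∧ c ≠ t ∧ s ≠ t

/-- The candidate set `W ∪ X ∪ Y ∪ {c, s, t}`. -/
def TDMCands {α : Type*} [DecidableEq α] (Ws Xs Ys : Finset α) (c s t : α) :
    Finset α :=
  Ws ∪ Xs ∪ Ys ∪ {c, s, t}

/-- The voter simulating a triple `(w, x, y)` of `M` (lists are in increasing
preference). If `odd` (1-based odd index) the order is
`⟨s < c < w < x < y < t < rest⟩`, otherwise `s` and `t` are exchanged; `R` lists
the remaining candidates in arbitrary order. -/
def IsTripleVoter {α : Type*} [DecidableEq α] (Cs : Finset α) (c s t w x y : α)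
    (odd : Bool) (v : List α) : Prop :=
  ∃ R : List α, R.Nodup ∧
    (∀ z, z ∈ R ↔ (z ∈ Cs ∧ z ∉ ({s, c, w, x, y, t} : Finset α))) ∧
    v = (if odd then [s, c, w, x, y, t] else [t, c, w, x, y, s]) ++ R

/-- A voter ranking `c` on top of all other candidates. -/
def IsTopVoter {α : Type*} [DecidableEq α] (Cs : Finset α) (c : α)
    (v : List α) : Prop :=
  ∃ R : List α, R.Nodup ∧ (∀ z, z ∈ R ↔ (z ∈ Cs ∧ z ≠ c)) ∧ v = R ++ [c]

/-- The election built from the 3DM instance: one voter per triple of `M`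
(`s` and `t` alternating with the parity of the 1-based index), followed by
`||M|| - 1` voters ranking `c` on top; `2||M|| - 1` voters in total. -/
def IsTDMElection {α : Type*} [DecidableEq α] (Ws Xs Ys : Finset α)
    (M : List (α × α × α)) (c s t : α) (V : List (List α)) : Prop :=
  ∃ V₁ V₂ : List (List α),
    V = V₁ ++ V₂ ∧
    V₂.length = M.length - 1 ∧
    (∃ h : V₁.length = M.length, ∀ i : Fin V₁.length,
      IsTripleVoter (TDMCands Ws Xs Ys c s t) c s t
        (M.get ⟨(i : ℕ), h ▸ i.isLt⟩).1
        (M.get ⟨(i : ℕ), h ▸ i.isLt⟩).2.1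
        (M.get ⟨(i : ℕ), h ▸ i.isLt⟩).2.2
        ((i : ℕ) % 2 == 0) (V₁.get i)) ∧
    (∀ v ∈ V₂, IsTopVoter (TDMCands Ws Xs Ys c s t) c v)

/-- `M` contains a matching: `q = ||Ws||` pairwise coordinate-disjoint triples. -/
def HasMatching {α : Type*} [DecidableEq α] (Ws : Finset α)
    (M : List (α × α × α)) : Prop :=
  ∃ M' : Finset (α × α × α), (∀ m ∈ M', m ∈ M) ∧ M'.card = Ws.card ∧
    ∀ m₁ ∈ M', ∀ m₂ ∈ M', m₁ ≠ m₂ →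
      m₁.1 ≠ m₂.1 ∧ m₁.2.1 ≠ m₂.2.1 ∧ m₁.2.2 ≠ m₂.2.2

/-!
Every `d ∈ W ∪ X ∪ Y` is ranked below `c` only by the `‖M‖ - 1` voters putting `c` on top, one
vote short of a strict majority among the `2‖M‖ - 1` voters, and a single switch raises the
support of `c` against at most one rival, by one vote. So the total shortfall `3q` is a lower
bound. Conversely, moving `c` past `w`, `x`, `y` in the voter of each triple of the matching costs
`3q` switches and gives `c` the missing vote against every candidate of `W ∪ X ∪ Y`, since the
matching covers each of them; `c` already beats `s` and `t` in the first two triple voters, which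
rank them last.
-/

namespace Reach

variable {β : Type*} {R : β → β → Prop}

theorem trans {k m : ℕ} {a b c : β} (h₁ : Reach R k a b) (h₂ : Reach R m b c) :
    Reach R (k + m) a c := by
  induction k generalizing a with
  | zero => cases h₁; simpa using h₂
  | succ k ih =>
    obtain ⟨d, hd, hr⟩ := h₁
    rw [Nat.succ_add]
    exact ⟨d, hd, ih hr⟩

theorem map {γ : Type*} {T : γ → γ → Prop} (f : β → γ) (hf : ∀ a b, R a b → T (f a) (f b))
    {k : ℕ} {a b : β} (h : Reach R k a b) : Reach T k (f a) (f b) := by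
  induction k generalizing a with
  | zero => cases h; rfl
  | succ k ih => obtain ⟨m, h₁, h₂⟩ := h; exact ⟨f m, hf _ _ h₁, ih h₂⟩

theorem le_add (φ : β → ℕ) (hφ : ∀ a b, R a b → φ a ≤ φ b + 1) {k : ℕ} {a b : β}
    (h : Reach R k a b) : φ a ≤ φ b + k := by
  induction k generalizing a with
  | zero => cases h; simp
  | succ k ih =>
    obtain ⟨m, h₁, h₂⟩ := h
    have := hφ _ _ h₁
    have := ih h₂
    omega

end Reach

section Preferences

variable {α : Type*} [DecidableEq α]

theorem prefers_append_of_mem_of_notMem {l : List α} (r : List α) {a b : α}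
    (hb : b ∈ l) (ha : a ∉ l) : prefers (l ++ r) a b := by
  rw [prefers, List.idxOf_append_of_mem hb, List.idxOf_append_of_notMem ha]
  exact (List.idxOf_lt_length_iff.2 hb).trans_le (Nat.le_add_right _ _)

theorem not_prefers_cons_cons {a c b : α} (r : List α) (hb : b ≠ a) :
    ¬ prefers (a :: c :: r) c b := by
  rw [prefers, List.idxOf_cons_ne _ hb.symm, not_lt]
  rcases eq_or_ne a c with rfl | hc
  · simp
  · simp [List.idxOf_cons_ne _ hc]

theorem prefers_append_swap_iff (l r : List α) {x y a b : α}
    (h : ¬((a = x ∧ b = y) ∨ (a = y ∧ b = x))) :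
    prefers (l ++ y :: x :: r) a b ↔ prefers (l ++ x :: y :: r) a b := by
  unfold prefers
  induction l with
  | cons e l ih =>
    rcases eq_or_ne e a with rfl | ha <;> rcases eq_or_ne e b with rfl | hb <;>
      simp [List.idxOf_cons_ne, *]
  | nil =>
    by_cases hax : x = a <;> by_cases hay : y = a <;> by_cases hbx : x = b <;>
      by_cases hby : y = b <;> simp_all

theorem SwitchVoter.exists_prefers_iff {v w : List α} (h : SwitchVoter v w) (a : α) :
    ∃ b₀, ∀ b, b ≠ b₀ → (prefers w a b ↔ prefers v a b) := by
  obtain ⟨l, r, x, y, rfl, rfl⟩ := h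
  refine ⟨if a = x then y else x, fun b hb => prefers_append_swap_iff l r ?_⟩
  by_cases hax : a = x <;> simp_all

end Preferences

section Switches

variable {α : Type*}

theorem SwitchProfile.length_eq {V W : List (List α)} (h : SwitchProfile V W) :
    W.length = V.length := by
  obtain ⟨P, Q, v, w, rfl, rfl, -⟩ := h
  simp

theorem SwitchVoter.switchProfile_cons {v w : List α} (h : SwitchVoter v w) (V : List (List α)) :
    SwitchProfile (v :: V) (w :: V) :=
  ⟨[], V, v, w, rfl, rfl, h⟩

theorem SwitchProfile.cons {V W : List (List α)} (h : SwitchProfile V W) (v : List α) :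
    SwitchProfile (v :: V) (v :: W) := by
  obtain ⟨P, Q, a, b, rfl, rfl, hab⟩ := h
  exact ⟨v :: P, Q, a, b, rfl, rfl, hab⟩

theorem SwitchProfile.append_right {V W : List (List α)} (h : SwitchProfile V W)
    (V' : List (List α)) : SwitchProfile (V ++ V') (W ++ V') := by
  obtain ⟨P, Q, a, b, rfl, rfl, hab⟩ := h
  exact ⟨P, Q ++ V', a, b, by simp, by simp, hab⟩

theorem Reach.switchProfile_cons {k m : ℕ} {v w : List α} {V W : List (List α)}
    (h₁ : Reach SwitchVoter k v w) (h₂ : Reach SwitchProfile m V W) :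
    Reach SwitchProfile (k + m) (v :: V) (w :: W) :=
  (h₁.map (· :: V) fun _ _ h => h.switchProfile_cons V).trans
    (h₂.map (w :: ·) fun _ _ h => h.cons w)

theorem Reach.switchProfile_ofFn {n : ℕ} {f g : Fin n → List α} {k : Fin n → ℕ}
    (h : ∀ i, Reach SwitchVoter (k i) (f i) (g i)) :
    Reach SwitchProfile (∑ i, k i) (List.ofFn f) (List.ofFn g) := by
  induction n with
  | zero => rfl
  | succ n ih =>
    rw [List.ofFn_succ, List.ofFn_succ, Fin.sum_univ_succ]
    exact (h 0).switchProfile_cons (ih fun i => h i.succ)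

theorem reach_switchVoter_three (a c w x y : α) (r : List α) :
    Reach SwitchVoter 3 (a :: c :: w :: x :: y :: r) (a :: w :: x :: y :: c :: r) :=
  ⟨_, ⟨[a], _, c, w, rfl, rfl⟩, _, ⟨[a, w], _, c, x, rfl, rfl⟩,
    _, ⟨[a, w, x], _, c, y, rfl, rfl⟩, rfl⟩

end Switches

section Counting

variable {α : Type*} [DecidableEq α]

instance (v : List α) (x y : α) : Decidable (prefers v x y) := Nat.decLt _ _

theorem numPrefer_eq_countP (V : List (List α)) (x y : α) :
    numPrefer V x y = V.countP fun v => prefers v x y :=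
  List.countP_eq_length_filter.symm

theorem numPrefer_append (V V' : List (List α)) (x y : α) :
    numPrefer (V ++ V') x y = numPrefer V x y + numPrefer V' x y := by
  simp only [numPrefer_eq_countP, List.countP_append]

theorem numPrefer_pos_iff {V : List (List α)} {x y : α} :
    0 < numPrefer V x y ↔ ∃ v ∈ V, prefers v x y := by
  simp [numPrefer_eq_countP, List.countP_pos_iff]

theorem numPrefer_eq_length {V : List (List α)} {x y : α} (h : ∀ v ∈ V, prefers v x y) :
    numPrefer V x y = V.length := by
  simpa [numPrefer_eq_countP, List.countP_eq_length]

theorem numPrefer_eq_zero {V : List (List α)} {x y : α} (h : ∀ v ∈ V, ¬ prefers v x y) :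
    numPrefer V x y = 0 := by
  simpa [numPrefer_eq_countP, List.countP_eq_zero]

theorem SwitchProfile.exists_numPrefer_le {V W : List (List α)} (h : SwitchProfile V W) (c : α) :
    ∃ d₀, ∀ d, numPrefer W c d ≤ numPrefer V c d + if d = d₀ then 1 else 0 := by
  obtain ⟨P, Q, v, w, rfl, rfl, hvw⟩ := h
  obtain ⟨d₀, hd₀⟩ := hvw.exists_prefers_iff c
  refine ⟨d₀, fun d => ?_⟩
  simp only [numPrefer_eq_countP, List.countP_append, List.countP_cons]
  by_cases hd : d = d₀
  · simp only [hd, if_true]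
    split_ifs <;> omega
  · simp [hd, hd₀ d hd]

end Counting

section Dodgson

variable {α : Type*} [DecidableEq α]

/-- `V.length / 2 + 1` is the smallest strict majority of `V`. -/
def majorityDeficit (D : Finset α) (V : List (List α)) (c : α) : ℕ :=
  ∑ d ∈ D, (V.length / 2 + 1 - numPrefer V c d)

theorem SwitchProfile.majorityDeficit_le {V W : List (List α)} (h : SwitchProfile V W)
    (D : Finset α) (c : α) : majorityDeficit D V c ≤ majorityDeficit D W c + 1 := by
  obtain ⟨d₀, hd₀⟩ := h.exists_numPrefer_le c
  calc majorityDeficit D V c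
      ≤ ∑ d ∈ D, ((W.length / 2 + 1 - numPrefer W c d) + if d = d₀ then 1 else 0) := by
        refine Finset.sum_le_sum fun d _ => ?_
        have := hd₀ d
        rw [h.length_eq]
        split_ifs at this ⊢ <;> omega
    _ ≤ majorityDeficit D W c + 1 := by
        rw [Finset.sum_add_distrib, Finset.sum_ite_eq']
        split_ifs <;> simp [majorityDeficit]

theorem CondorcetWinner.majorityDeficit_eq_zero {C D : Finset α} {W : List (List α)} {c : α}
    (h : CondorcetWinner C W c) (hD : D ⊆ C.erase c) : majorityDeficit D W c = 0 :=
  Finset.sum_eq_zero fun d hd => by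
    obtain ⟨hdc, hdC⟩ := Finset.mem_erase.1 (hD hd)
    have := h.2 d hdC hdc
    omega

theorem dodgsonScore_eq_of_reach {C D : Finset α} {V W : List (List α)} {c : α} {k : ℕ}
    (hD : D ⊆ C.erase c) (hk : k ≤ majorityDeficit D V c)
    (hreach : Reach SwitchProfile k V W) (hW : CondorcetWinner C W c) :
    DodgsonScore C V c = k := by
  refine le_antisymm (Nat.sInf_le ⟨W, hreach, hW⟩) (le_csInf ⟨k, W, hreach, hW⟩ ?_)
  rintro k' ⟨W', hreach', hW'⟩
  have := hreach'.le_add (majorityDeficit D · c) fun _ _ h => h.majorityDeficit_le D c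
  rw [hW'.majorityDeficit_eq_zero hD] at this
  omega

end Dodgson

theorem List.Nodup.card_filter_getElem_mem {β : Type*} [DecidableEq β] {L : List β}
    (hL : L.Nodup) {S : Finset β} (hS : ∀ m ∈ S, m ∈ L) :
    (Finset.univ.filter fun i : Fin L.length => L[i] ∈ S).card = S.card := by
  refine Finset.card_bij (fun i _ => L[i]) (fun i hi => (Finset.mem_filter.1 hi).2)
    (fun i _ j _ hij => Fin.ext (hL.getElem_inj_iff.1 hij)) fun m hm => ?_
  obtain ⟨i, hi, rfl⟩ := List.mem_iff_getElem.1 (hS m hm)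
  exact ⟨⟨i, hi⟩, by simpa using hm, rfl⟩

section Election

variable {α : Type*} [DecidableEq α]

/-- The voters of the triples of `M`, where `R i` lists the candidates above `y` in voter `i`
and `c` has been moved up past its triple in the voters of the triples in `S`. -/
def tripleVoters (M : List (α × α × α)) (c s t : α) (R : Fin M.length → List α)
    (S : Finset (α × α × α)) : List (List α) :=
  List.ofFn fun i =>
    (if (i : ℕ) % 2 = 0 then s else t) ::
      if M[i] ∈ S then M[i].1 :: M[i].2.1 :: M[i].2.2 :: c :: R i
      else c :: M[i].1 :: M[i].2.1 :: M[i].2.2 :: R i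

@[simp]
theorem length_tripleVoters (M : List (α × α × α)) (c s t : α) (R : Fin M.length → List α)
    (S : Finset (α × α × α)) : (tripleVoters M c s t R S).length = M.length :=
  List.length_ofFn

theorem IsTDMElection.exists_eq_tripleVoters_append {Ws Xs Ys : Finset α}
    {M : List (α × α × α)} {c s t : α} {V : List (List α)}
    (h : IsTDMElection Ws Xs Ys M c s t V) :
    ∃ (R : Fin M.length → List α) (V₂ : List (List α)),
      V = tripleVoters M c s t R ∅ ++ V₂ ∧ V₂.length = M.length - 1 ∧
      ∀ v ∈ V₂, IsTopVoter (TDMCands Ws Xs Ys c s t) c v := by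
  obtain ⟨V₁, V₂, rfl, hV₂, ⟨hlen, hV₁⟩, htop⟩ := h
  choose R _ _ hR using hV₁
  refine ⟨fun i => (if (i : ℕ) % 2 = 0 then t else s) :: R (i.cast hlen.symm), V₂, ?_, hV₂, htop⟩
  congr 1
  refine List.ext_getElem (by simp [hlen]) fun j h₁ h₂ => ?_
  have := hR ⟨j, h₁⟩
  simp only [List.get_eq_getElem, beq_iff_eq, tripleVoters, Fin.getElem_fin, Finset.notMem_empty,
    ↓reduceIte, List.getElem_ofFn, Fin.cast_mk] at this ⊢
  split_ifs at this ⊢ <;> simp_all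

theorem reach_tripleVoters {M : List (α × α × α)} (hM : M.Nodup) {S : Finset (α × α × α)}
    (hS : ∀ m ∈ S, m ∈ M) (c s t : α) (R : Fin M.length → List α) :
    Reach SwitchProfile (3 * S.card) (tripleVoters M c s t R ∅) (tripleVoters M c s t R S) := by
  have hcost : 3 * S.card = ∑ i : Fin M.length, if M[i] ∈ S then 3 else 0 := by
    rw [Finset.sum_ite, Finset.sum_const_zero, add_zero, Finset.sum_const,
      hM.card_filter_getElem_mem hS, smul_eq_mul, mul_comm]
  rw [hcost]
  refine Reach.switchProfile_ofFn fun i => ?_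
  by_cases hi : M[i] ∈ S
  · simp only [hi, Finset.notMem_empty, if_true, if_false]
    exact reach_switchVoter_three ..
  · simp only [hi, Finset.notMem_empty, if_false]
    rfl

theorem numPrefer_tripleVoters_empty {M : List (α × α × α)} {c s t d : α}
    (R : Fin M.length → List α) (hds : d ≠ s) (hdt : d ≠ t) :
    numPrefer (tripleVoters M c s t R ∅) c d = 0 := by
  refine numPrefer_eq_zero fun v hv => ?_
  obtain ⟨i, rfl⟩ := List.mem_ofFn.1 hv
  simp only [Finset.notMem_empty, if_false]
  exact not_prefers_cons_cons _ (by split_ifs <;> assumption)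

theorem numPrefer_tripleVoters_pos_of_mem {M : List (α × α × α)} {c s t d : α}
    {R : Fin M.length → List α} {S : Finset (α × α × α)} {i : Fin M.length} (hi : M[i] ∈ S)
    (hd : d ∈ [M[i].1, M[i].2.1, M[i].2.2]) (hc : c ∉ [s, t, M[i].1, M[i].2.1, M[i].2.2]) :
    0 < numPrefer (tripleVoters M c s t R S) c d := by
  refine numPrefer_pos_iff.2 ⟨_, List.mem_ofFn.2 ⟨i, rfl⟩, ?_⟩
  simp only [hi, if_true]
  exact prefers_append_of_mem_of_notMem
    (l := [if (i : ℕ) % 2 = 0 then s else t, M[i].1, M[i].2.1, M[i].2.2]) (c :: R i)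
    (by simp_all) (by split_ifs <;> simp_all)

theorem numPrefer_tripleVoters_pos_of_bottom {M : List (α × α × α)} {c s t : α}
    (R : Fin M.length → List α) (S : Finset (α × α × α)) (i : Fin M.length)
    (hc : c ≠ if (i : ℕ) % 2 = 0 then s else t) :
    0 < numPrefer (tripleVoters M c s t R S) c (if (i : ℕ) % 2 = 0 then s else t) :=
  numPrefer_pos_iff.2 ⟨_, List.mem_ofFn.2 ⟨i, rfl⟩,
    prefers_append_of_mem_of_notMem (l := [_]) _ (List.mem_singleton_self _) (by simpa)⟩

theorem numPrefer_eq_length_of_isTopVoter {C : Finset α} {V : List (List α)} {c d : α}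
    (h : ∀ v ∈ V, IsTopVoter C c v) (hd : d ∈ C) (hdc : d ≠ c) :
    numPrefer V c d = V.length := by
  refine numPrefer_eq_length fun v hv => ?_
  obtain ⟨R, -, hR, rfl⟩ := h v hv
  exact prefers_append_of_mem_of_notMem _ ((hR d).2 ⟨hd, hdc⟩) fun hc => ((hR c).1 hc).2 rfl

end Election

section TDM

variable {α : Type*} [DecidableEq α] {Ws Xs Ys : Finset α} {M : List (α × α × α)} {c s t : α}

theorem mem_TDMCands {z : α} :
    z ∈ TDMCands Ws Xs Ys c s t ↔ z ∈ Ws ∪ Xs ∪ Ys ∨ z = c ∨ z = s ∨ z = t := by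
  simp only [TDMCands, Finset.mem_union, Finset.mem_insert, Finset.mem_singleton]

theorem TDMOK.card_union (hok : TDMOK Ws Xs Ys M c s t) :
    (Ws ∪ Xs ∪ Ys).card = 3 * Ws.card := by
  obtain ⟨-, -, -, hWX, hWY, hXY, hX, hY, -⟩ := hok
  rw [Finset.card_union_of_disjoint (Finset.disjoint_union_left.2 ⟨hWY, hXY⟩),
    Finset.card_union_of_disjoint hWX, ← hX, ← hY]
  ring

theorem TDMOK.union_subset_erase (hok : TDMOK Ws Xs Ys M c s t) :
    Ws ∪ Xs ∪ Ys ⊆ (TDMCands Ws Xs Ys c s t).erase c := by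
  obtain ⟨-, -, -, -, -, -, -, -, -, -, -, hc, -⟩ := hok
  intro d hd
  exact Finset.mem_erase.2 ⟨ne_of_mem_of_not_mem hd hc, mem_TDMCands.2 (Or.inl hd)⟩

theorem TDMOK.exists_mem_of_matching (hok : TDMOK Ws Xs Ys M c s t)
    {M' : Finset (α × α × α)} (hM'M : ∀ m ∈ M', m ∈ M) (hcard : M'.card = Ws.card)
    (hdisj : ∀ m₁ ∈ M', ∀ m₂ ∈ M', m₁ ≠ m₂ →
      m₁.1 ≠ m₂.1 ∧ m₁.2.1 ≠ m₂.2.1 ∧ m₁.2.2 ≠ m₂.2.2)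
    {d : α} (hd : d ∈ Ws ∪ Xs ∪ Ys) : ∃ m ∈ M', d ∈ [m.1, m.2.1, m.2.2] := by
  obtain ⟨-, -, -, -, -, -, hX, hY, hMc, -⟩ := hok
  have cover (f : α × α × α → α) (T : Finset α) (hf : ∀ m ∈ M', f m ∈ T)
      (hinj : ∀ m₁ ∈ M', ∀ m₂ ∈ M', m₁ ≠ m₂ → f m₁ ≠ f m₂) (hT : T.card = Ws.card)
      (hd : d ∈ T) : ∃ m ∈ M', f m = d := by
    obtain ⟨m, hm, rfl⟩ := Finset.surj_on_of_inj_on_of_card_le (fun m _ => f m) hf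
      (fun m₁ m₂ h₁ h₂ => not_imp_not.1 (hinj m₁ h₁ m₂ h₂)) (by omega) d hd
    exact ⟨m, hm, rfl⟩
  simp only [Finset.mem_union] at hd
  rcases hd with (hd | hd) | hd
  · obtain ⟨m, hm, rfl⟩ := cover (·.1) Ws (fun m hm => (hMc m (hM'M m hm)).1)
      (fun m₁ h₁ m₂ h₂ hne => (hdisj m₁ h₁ m₂ h₂ hne).1) rfl hd
    exact ⟨m, hm, by simp⟩
  · obtain ⟨m, hm, rfl⟩ := cover (·.2.1) Xs (fun m hm => (hMc m (hM'M m hm)).2.1)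
      (fun m₁ h₁ m₂ h₂ hne => (hdisj m₁ h₁ m₂ h₂ hne).2.1) hX.symm hd
    exact ⟨m, hm, by simp⟩
  · obtain ⟨m, hm, rfl⟩ := cover (·.2.2) Ys (fun m hm => (hMc m (hM'M m hm)).2.2)
      (fun m₁ h₁ m₂ h₂ hne => (hdisj m₁ h₁ m₂ h₂ hne).2.2) hY.symm hd
    exact ⟨m, hm, by simp⟩

theorem majorityDeficit_tripleVoters_append (hok : TDMOK Ws Xs Ys M c s t)
    (R : Fin M.length → List α) {V₂ : List (List α)} (hV₂ : V₂.length = M.length - 1)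
    (htop : ∀ v ∈ V₂, IsTopVoter (TDMCands Ws Xs Ys c s t) c v) :
    majorityDeficit (Ws ∪ Xs ∪ Ys) (tripleVoters M c s t R ∅ ++ V₂) c = 3 * Ws.card := by
  have hcard := hok.card_union
  obtain ⟨-, -, -, -, -, -, -, -, -, -, hlen, hc, hs, ht, -⟩ := hok
  have hterm : ∀ d ∈ Ws ∪ Xs ∪ Ys,
      (tripleVoters M c s t R ∅ ++ V₂).length / 2 + 1
        - numPrefer (tripleVoters M c s t R ∅ ++ V₂) c d = 1 := by
    intro d hd
    rw [numPrefer_append,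
      numPrefer_tripleVoters_empty R (ne_of_mem_of_not_mem hd hs) (ne_of_mem_of_not_mem hd ht),
      numPrefer_eq_length_of_isTopVoter htop (mem_TDMCands.2 (Or.inl hd))
        (ne_of_mem_of_not_mem hd hc),
      List.length_append, length_tripleVoters, hV₂]
    omega
  rw [majorityDeficit, Finset.sum_congr rfl hterm, Finset.sum_const, smul_eq_mul, mul_one, hcard]

theorem condorcetWinner_tripleVoters_append (hok : TDMOK Ws Xs Ys M c s t)
    {M' : Finset (α × α × α)} (hM'M : ∀ m ∈ M', m ∈ M)
    (hcover : ∀ d ∈ Ws ∪ Xs ∪ Ys, ∃ m ∈ M', d ∈ [m.1, m.2.1, m.2.2])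
    (R : Fin M.length → List α) {V₂ : List (List α)} (hV₂ : V₂.length = M.length - 1)
    (htop : ∀ v ∈ V₂, IsTopVoter (TDMCands Ws Xs Ys c s t) c v) :
    CondorcetWinner (TDMCands Ws Xs Ys c s t) (tripleVoters M c s t R M' ++ V₂) c := by
  obtain ⟨-, -, -, -, -, -, -, -, hMc, -, hlen, hc, -, -, hcs, hct, -⟩ := hok
  refine ⟨mem_TDMCands.2 (Or.inr (Or.inl rfl)), fun d hd hdc => ?_⟩
  have hpos : 0 < numPrefer (tripleVoters M c s t R M') c d := by
    rcases mem_TDMCands.1 hd with hd | rfl | rfl | rfl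
    · obtain ⟨m, hm, hdm⟩ := hcover d hd
      obtain ⟨i, hi, rfl⟩ := List.mem_iff_getElem.1 (hM'M m hm)
      have hcU : ∀ z ∈ Ws ∪ Xs ∪ Ys, c ≠ z := fun z hz => (ne_of_mem_of_not_mem hz hc).symm
      obtain ⟨hw, hx, hy⟩ := hMc _ (hM'M _ hm)
      refine numPrefer_tripleVoters_pos_of_mem (i := ⟨i, hi⟩) hm hdm ?_
      simp only [List.mem_cons, List.not_mem_nil, or_false, not_or]
      exact ⟨hcs, hct, hcU _ (by simp [hw]), hcU _ (by simp [hx]), hcU _ (by simp [hy])⟩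
    · exact absurd rfl hdc
    · simpa using numPrefer_tripleVoters_pos_of_bottom R M' ⟨0, by omega⟩ (by simpa)
    · simpa using numPrefer_tripleVoters_pos_of_bottom R M' ⟨1, hlen⟩ (by simpa)
  rw [numPrefer_append, numPrefer_eq_length_of_isTopVoter htop hd hdc, List.length_append,
    length_tripleVoters, hV₂]
  omega

end TDM

/-- In the election from a 3DM instance with `||M|| > 1` and
`q = ||W||`, if `M` contains a matching then the Dodgson score of the
distinguished candidate `c` is exactly `3q`. -/
theorem tdm_matching_score {α : Type*} [DecidableEq α]
    (Ws Xs Ys : Finset α) (M : List (α × α × α)) (c s t : α)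
    (V : List (List α))
    (hok : TDMOK Ws Xs Ys M c s t)
    (hel : IsTDMElection Ws Xs Ys M c s t V)
    (hmatch : HasMatching Ws M) :
    DodgsonScore (TDMCands Ws Xs Ys c s t) V c = 3 * Ws.card := by
  obtain ⟨R, V₂, rfl, hV₂, htop⟩ := hel.exists_eq_tripleVoters_append
  obtain ⟨M', hM'M, hcard, hdisj⟩ := hmatch
  have hM : M.Nodup := by
    obtain ⟨-, -, -, -, -, -, -, -, -, hM, -⟩ := hok
    exact hM
  have hreach : Reach SwitchProfile (3 * Ws.card)
      (tripleVoters M c s t R ∅ ++ V₂) (tripleVoters M c s t R M' ++ V₂) := by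
    rw [← hcard]
    exact (reach_tripleVoters hM hM'M c s t R).map (· ++ V₂)
      fun _ _ h => h.append_right V₂
  exact dodgsonScore_eq_of_reach hok.union_subset_erase
    (majorityDeficit_tripleVoters_append hok R hV₂ htop).ge hreach
    (condorcetWinner_tripleVoters_append hok hM'M
      (fun d hd => hok.exists_mem_of_matching hM'M hcard hdisj hd) R hV₂ htop)
end

section
/- In the election constructed from a 3DM instance (M,W,X,Y) with ||M|| > 1 and q = ||W||, if the Dodgson score of the distinguished candidate c equals 3q, then M contains a matching. -/
/-!
Initially each candidate of `W ∪ X ∪ Y` is ranked above `c` by every triple voter and below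
`c` only by the `‖M‖ - 1` top voters, so in a profile where `c` is a Condorcet winner `c` has
overtaken each of these `3q` candidates in at least one triple voter. A sequence of `k` switches
leaves at most `k` discordant pairs, so with `3q` switches every discordant pair has the form
`(c, d)` and every `d` is overtaken exactly once. In a triple voter `⟨σ < c < w < x < y < τ < ⋯⟩`
this rigidity means that `c` can only overtake `w`, `x`, `y`, and that overtaking `y` forces
overtaking `w` and `x`. The triples whose `y` is overtaken in their own voter form a matching.
-/

open Finset

theorem List.idxOf_append_cons_cons {α : Type*} [DecidableEq α] {l r : List α} {a b : α}
    (hab : a ≠ b) (z : α) :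
    (l ++ b :: a :: r).idxOf z =
      Equiv.swap l.length (l.length + 1) ((l ++ a :: b :: r).idxOf z) := by
  induction l with
  | nil =>
    by_cases hza : z = a
    · subst hza; simp [List.idxOf_cons_ne _ (Ne.symm hab)]
    by_cases hzb : z = b
    · subst hzb; simp [List.idxOf_cons_ne _ hab]
    simp only [List.nil_append, List.idxOf_cons_ne _ (Ne.symm hza),
      List.idxOf_cons_ne _ (Ne.symm hzb), List.length_nil]
    rw [Equiv.swap_apply_of_ne_of_ne] <;> omega
  | cons x l ih =>
    by_cases hzx : z = x
    · subst hzx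
      simp only [List.cons_append, List.idxOf_cons_self, List.length_cons]
      rw [Equiv.swap_apply_of_ne_of_ne] <;> omega
    · simp only [List.cons_append, List.idxOf_cons_ne _ (Ne.symm hzx), List.length_cons, ih]
      simp only [Equiv.swap_apply_def]
      split_ifs <;> omega

theorem List.getD_append_cons_of_ne {β : Type*} (P Q : List β) (v w d : β) {j : ℕ}
    (hj : j ≠ P.length) : (P ++ v :: Q).getD j d = (P ++ w :: Q).getD j d := by
  simp only [List.getD_eq_getElem?_getD, List.getElem?_append]
  split_ifs with h
  · rfl
  · obtain ⟨k, hk⟩ : ∃ k, j - P.length = k + 1 := ⟨j - P.length - 1, by omega⟩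
    simp [hk]

theorem Finset.pairwiseDisjoint_of_sum_card_le_card_biUnion {ι β : Type*} [DecidableEq β]
    {s : Finset ι} {G : ι → Finset β} (h : ∑ i ∈ s, #(G i) ≤ #(s.biUnion G)) :
    (s : Set ι).PairwiseDisjoint G := by
  classical
  intro i hi j hj hij
  rw [Function.onFun, Finset.disjoint_left]
  intro d hdi hdj
  have hsplit : s.biUnion G = G i ∪ (s.erase i).biUnion G := by
    conv_lhs => rw [← insert_erase (mem_coe.1 hi)]
    rw [biUnion_insert]
  have hd : d ∈ G i ∩ (s.erase i).biUnion G :=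
    mem_inter.2 ⟨hdi, mem_biUnion.2 ⟨j, mem_erase.2 ⟨Ne.symm hij, hj⟩, hdj⟩⟩
  have hinter := card_pos.2 ⟨d, hd⟩
  have hunion := card_union_add_card_inter (G i) ((s.erase i).biUnion G)
  have hrest : #((s.erase i).biUnion G) ≤ ∑ k ∈ s.erase i, #(G k) := card_biUnion_le
  rw [← add_sum_erase _ _ (mem_coe.1 hi), hsplit] at h
  omega

theorem Finset.image_eq_and_pairwiseDisjoint_of_sum_card_le {ι β γ : Type*} [DecidableEq β]
    [DecidableEq γ] {s : Finset ι} {U : Finset β} {G : ι → Finset β} {D : ι → Finset γ}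
    {f : β → γ} (hf : Function.Injective f) (hGD : ∀ i ∈ s, (G i).image f ⊆ D i)
    (hU : U ⊆ s.biUnion G) (hD : ∑ i ∈ s, #(D i) ≤ #U) :
    (∀ i ∈ s, (G i).image f = D i) ∧ (s : Set ι).PairwiseDisjoint G := by
  have hle : ∀ i ∈ s, #(G i) ≤ #(D i) := fun i hi =>
    card_image_of_injective _ hf ▸ card_le_card (hGD i hi)
  have hcover := (card_le_card hU).trans card_biUnion_le
  refine ⟨fun i hi => ?_, pairwiseDisjoint_of_sum_card_le_card_biUnion
    ((sum_le_sum hle).trans (hD.trans (card_le_card hU)))⟩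
  have hsum : ∑ i ∈ s, #(G i) = ∑ i ∈ s, #(D i) :=
    le_antisymm (sum_le_sum hle) (hD.trans hcover)
  refine eq_of_subset_of_card_le (hGD i hi) ?_
  rw [card_image_of_injective _ hf, (sum_eq_sum_iff_of_le hle).1 hsum i hi]

section Ballots

variable {α : Type*} [DecidableEq α]

instance inst_s10 (v : List α) (x y : α) : Decidable (prefers v x y) :=
  inferInstanceAs (Decidable (_ < _))

def discordantPairs (u f : List α) : Finset (α × α) :=
  (u.toFinset ×ˢ f.toFinset).filter fun p => prefers u p.2 p.1 ∧ prefers f p.1 p.2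

@[simp]
theorem mem_discordantPairs {u f : List α} {p : α × α} :
    p ∈ discordantPairs u f ↔ prefers u p.2 p.1 ∧ prefers f p.1 p.2 := by
  rw [discordantPairs, Finset.mem_filter, mem_product, List.mem_toFinset, List.mem_toFinset,
    and_iff_right_iff_imp]
  exact fun h => ⟨List.idxOf_lt_length_iff.1 (h.1.trans_le List.idxOf_le_length),
    List.idxOf_lt_length_iff.1 (h.2.trans_le List.idxOf_le_length)⟩

theorem SwitchVoter.card_discordantPairs_le {u u' : List α} (h : SwitchVoter u u')
    (f : List α) : #(discordantPairs u f) ≤ #(discordantPairs u' f) + 1 := by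
  obtain ⟨l, r, a, b, rfl, rfl⟩ := h
  by_cases hab : a = b
  · subst hab; exact Nat.le_succ _
  have hsub : discordantPairs (l ++ a :: b :: r) f ⊆
      insert (a, b) (discordantPairs (l ++ b :: a :: r) f) := by
    rintro ⟨p, q⟩ hpq
    rw [mem_discordantPairs] at hpq
    rw [mem_insert, mem_discordantPairs]
    by_contra! hne
    refine hne.2 ?_ hpq.2
    have hlt := hpq.1
    simp only [prefers, List.idxOf_append_cons_cons hab] at hlt ⊢
    by_contra hswap
    -- the swap of positions `|l|` and `|l| + 1` reverses only the pair at those positions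
    have hpos : (l ++ a :: b :: r).idxOf p = l.length ∧
        (l ++ a :: b :: r).idxOf q = l.length + 1 := by
      simp only [Equiv.swap_apply_def] at hswap
      split_ifs at hswap <;> omega
    have hp := List.getElem_idxOf (hpos.1 ▸ (by simp) : (l ++ a :: b :: r).idxOf p < _)
    have hq := List.getElem_idxOf (hpos.2 ▸ (by simp) : (l ++ a :: b :: r).idxOf q < _)
    simp only [hpos, le_refl, List.getElem_append_right, tsub_self, List.getElem_cons_zero,
      le_add_iff_nonneg_right, zero_le, add_tsub_cancel_left, List.getElem_cons_succ] at hp hq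
    exact hne.1 (by rw [hp, hq])
  exact (card_le_card hsub).trans (card_insert_le _ _)

def profileDiscordance (A B : List (List α)) : ℕ :=
  ∑ j ∈ range A.length, #(discordantPairs (A.getD j []) (B.getD j []))

theorem SwitchProfile.profileDiscordance_le {A A' : List (List α)} (h : SwitchProfile A A')
    (B : List (List α)) : profileDiscordance A B ≤ profileDiscordance A' B + 1 := by
  obtain ⟨P, Q, v, w, rfl, rfl, hvw⟩ := h
  have hP : P.length ∈ range (P ++ v :: Q).length := by simp
  have hlen : (P ++ w :: Q).length = (P ++ v :: Q).length := by simp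
  unfold profileDiscordance
  rw [hlen, ← add_sum_erase _ _ hP, ← add_sum_erase _ _ hP]
  have hrest : ∀ j ∈ (range (P ++ v :: Q).length).erase P.length,
      (P ++ v :: Q).getD j [] = (P ++ w :: Q).getD j [] :=
    fun j hj => List.getD_append_cons_of_ne P Q v w [] (ne_of_mem_erase hj)
  rw [sum_congr rfl fun j hj => by rw [hrest j hj]]
  simp only [List.getD_eq_getElem?_getD, List.getElem?_append_right le_rfl, Nat.sub_self,
    List.getElem?_cons_zero, Option.getD_some]
  have := SwitchVoter.card_discordantPairs_le hvw ((B[P.length]?).getD [])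
  omega

omit [DecidableEq α] in
theorem Reach.length_eq {k : ℕ} {A B : List (List α)} (h : Reach SwitchProfile k A B) :
    A.length = B.length := by
  induction k generalizing A with
  | zero => exact congrArg List.length h
  | succ k ih =>
    obtain ⟨A', ⟨P, Q, v, w, rfl, rfl, -⟩, h'⟩ := h
    simpa using ih h'

theorem Reach.profileDiscordance_le {k : ℕ} {A B : List (List α)}
    (h : Reach SwitchProfile k A B) : profileDiscordance A B ≤ k := by
  induction k generalizing A with
  | zero =>
    cases h
    refine (sum_eq_zero fun j _ => ?_).le
    simp only [card_eq_zero, eq_empty_iff_forall_notMem, mem_discordantPairs, prefers]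
    omega
  | succ k ih =>
    obtain ⟨A', hstep, h'⟩ := h
    have := SwitchProfile.profileDiscordance_le hstep B
    have := ih h'
    omega

theorem exists_reach_of_dodgsonScore_eq {C : Finset α} {V : List (List α)} {c : α} {k : ℕ}
    (h : DodgsonScore C V c = k) (hk : k ≠ 0) :
    ∃ W, Reach SwitchProfile k V W ∧ CondorcetWinner C W c := by
  have hne : {k | ∃ W, Reach SwitchProfile k V W ∧ CondorcetWinner C W c}.Nonempty := by
    by_contra hempty
    rw [Set.not_nonempty_iff_eq_empty] at hempty
    rw [DodgsonScore, hempty, Nat.sInf_empty] at h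
    exact hk h.symm
  exact h ▸ Nat.sInf_mem hne

theorem numPrefer_eq_card (V : List (List α)) (c d : α) :
    numPrefer V c d = #{j ∈ range V.length | prefers (V.getD j []) c d} := by
  induction V with
  | nil => rfl
  | cons v V ih =>
    rw [card_filter, List.length_cons, sum_range_succ']
    simp only [List.getD_cons_succ, List.getD_cons_zero, ← card_filter, ← ih]
    unfold numPrefer
    by_cases hv : prefers v c d
    · rw [if_pos hv, List.filter_cons_of_pos (by simpa only [decide_eq_true_eq, prefers] using hv),
        List.length_cons]
    · rw [if_neg hv, List.filter_cons_of_neg (by simpa only [decide_eq_true_eq, prefers] using hv),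
        Nat.add_zero]

def Gains (v f : List α) (c d : α) : Prop :=
  ¬ prefers v c d ∧ prefers f c d

instance (v f : List α) (c d : α) : Decidable (Gains v f c d) :=
  inferInstanceAs (Decidable (_ ∧ _))

theorem mk_mem_discordantPairs_of_gains {v f : List α} {c d : α} (hc : c ∈ v) (hcd : c ≠ d)
    (h : Gains v f c d) : (c, d) ∈ discordantPairs v f := by
  have hidx : v.idxOf c ≠ v.idxOf d := fun he => hcd ((List.idxOf_inj hc).1 he)
  have := h.1
  unfold prefers at this
  exact mem_discordantPairs.2 ⟨show v.idxOf c < v.idxOf d by omega, h.2⟩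

theorem prefers_of_discordantPairs_fst_eq {v f : List α} {b c e : α}
    (hD : ∀ p ∈ discordantPairs v f, p.1 = c) (hec : e ≠ c) (hbe : prefers v b e)
    (hcb : prefers f c b) : prefers f c e := by
  by_contra hce
  unfold prefers at hcb hce
  exact hec (hD (e, b) (mem_discordantPairs.2 ⟨hbe, show f.idxOf b < f.idxOf e by omega⟩))

theorem prefers_of_nodup {l₁ l₂ : List α} {a b : α} (h : (l₁ ++ a :: l₂).Nodup)
    (hb : b ∈ l₂) : prefers (l₁ ++ a :: l₂) b a := by
  obtain ⟨-, ha₂, hdisj⟩ := List.nodup_append.1 h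
  have ha₁ : a ∉ l₁ := fun ha => hdisj a ha a List.mem_cons_self rfl
  have hb₁ : b ∉ l₁ := fun hb' => hdisj b hb' b (List.mem_cons_of_mem a hb) rfl
  have hba : b ≠ a := fun he => (List.nodup_cons.1 ha₂).1 (he ▸ hb)
  unfold prefers
  rw [List.idxOf_append_of_notMem ha₁, List.idxOf_append_of_notMem hb₁,
    List.idxOf_cons_self, List.idxOf_cons_ne _ (Ne.symm hba)]
  omega

end Ballots

section Voters

variable {α : Type*} [DecidableEq α] {Cs : Finset α} {c s t w x y : α} {odd : Bool}
  {v f : List α}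

theorem IsTripleVoter.exists_eq_cons (hv : IsTripleVoter Cs c s t w x y odd v)
    (hnd : [s, c, w, x, y, t].Nodup) :
    v.Nodup ∧ ∃ σ τ R, (σ = s ∨ σ = t) ∧ (τ = s ∨ τ = t) ∧
      (∀ z ∈ Cs, z ∉ ({s, c, w, x, y, t} : Finset α) → z ∈ R) ∧
      v = σ :: c :: w :: x :: y :: τ :: R := by
  obtain ⟨R, hR, hRmem, rfl⟩ := hv
  have hdisj : ∀ z ∈ R, z ∉ [s, c, w, x, y, t] := fun z hz => by simpa using ((hRmem z).1 hz).2
  have hmem : ∀ z ∈ Cs, z ∉ ({s, c, w, x, y, t} : Finset α) → z ∈ R :=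
    fun z hz hz' => (hRmem z).2 ⟨hz, hz'⟩
  cases odd
  · refine ⟨?_, t, s, R, Or.inr rfl, Or.inl rfl, hmem, rfl⟩
    refine List.nodup_append.2 ⟨?_, hR, fun a ha b hb hab => ?_⟩
    · simp only [List.nodup_cons, List.mem_cons, List.not_mem_nil] at hnd ⊢
      grind
    · subst hab
      refine hdisj a hb ?_
      simp only [Bool.false_eq_true, ↓reduceIte, List.mem_cons, List.not_mem_nil,
        or_false] at ha ⊢
      tauto
  · exact ⟨List.nodup_append.2 ⟨hnd, hR, fun a ha b hb hab => hdisj b hb (hab ▸ ha)⟩,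
      s, t, R, Or.inl rfl, Or.inr rfl, hmem, rfl⟩

theorem IsTripleVoter.not_prefers (hv : IsTripleVoter Cs c s t w x y odd v)
    (hnd : [s, c, w, x, y, t].Nodup) {d : α} (hds : d ≠ s) (hdt : d ≠ t) :
    ¬ prefers v c d := by
  obtain ⟨hv', σ, τ, R, hσ, -, -, rfl⟩ := hv.exists_eq_cons hnd
  have hσc : σ ≠ c := fun h => (List.nodup_cons.1 hv').1 (by simp [h])
  have hdσ : d ≠ σ := by rcases hσ with rfl | rfl <;> assumption
  unfold prefers
  rw [List.idxOf_cons_ne _ hσc, List.idxOf_cons_self, List.idxOf_cons_ne _ hdσ.symm]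
  omega

theorem IsTripleVoter.not_prefers_of_discordantPairs (hv : IsTripleVoter Cs c s t w x y odd v)
    (hnd : [s, c, w, x, y, t].Nodup) {U : Finset α}
    (hD : ∀ p ∈ discordantPairs v f, p.1 = c ∧ p.2 ∈ U) (hs : s ∉ U) (ht : t ∉ U) {d : α}
    (hd : d ∈ Cs) (hd' : d ∉ ({s, c, w, x, y, t} : Finset α)) : ¬ prefers f c d := by
  obtain ⟨hv', σ, τ, R, -, hτ, hR, rfl⟩ := hv.exists_eq_cons hnd
  intro hcd
  have hτc : τ ≠ c := fun h => (List.nodup_cons.1 (List.nodup_cons.1 hv').2).1 (by simp [h])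
  have hτ_c : prefers (σ :: c :: w :: x :: y :: τ :: R) τ c :=
    prefers_of_nodup (l₁ := [σ]) hv' (by simp)
  have hd_τ : prefers (σ :: c :: w :: x :: y :: τ :: R) d τ :=
    prefers_of_nodup (l₁ := [σ, c, w, x, y]) hv' (hR d hd hd')
  have hcτ := prefers_of_discordantPairs_fst_eq (fun p hp => (hD p hp).1) hτc hd_τ hcd
  have hτU := (hD (c, τ) (mem_discordantPairs.2 ⟨hτ_c, hcτ⟩)).2
  rcases hτ with rfl | rfl
  exacts [hs hτU, ht hτU]

theorem IsTripleVoter.gains_of_prefers (hv : IsTripleVoter Cs c s t w x y odd v)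
    (hnd : [s, c, w, x, y, t].Nodup) (hD : ∀ p ∈ discordantPairs v f, p.1 = c)
    (hy : prefers f c y) : Gains v f c w ∧ Gains v f c x := by
  obtain ⟨hv', σ, τ, R, -, -, -, rfl⟩ := hv.exists_eq_cons hnd
  have hc := (List.nodup_cons.1 (List.nodup_cons.1 hv').2).1
  have hwc : w ≠ c := fun h => hc (by simp [h])
  have hxc : x ≠ c := fun h => hc (by simp [h])
  exact ⟨⟨lt_asymm (prefers_of_nodup (l₁ := [σ]) hv' (by simp)),
      prefers_of_discordantPairs_fst_eq hD hwc (prefers_of_nodup (l₁ := [σ, c]) hv' (by simp)) hy⟩,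
    ⟨lt_asymm (prefers_of_nodup (l₁ := [σ]) hv' (by simp)),
      prefers_of_discordantPairs_fst_eq hD hxc
        (prefers_of_nodup (l₁ := [σ, c, w]) hv' (by simp)) hy⟩⟩

end Voters

theorem hasMatching_of_pairwiseDisjoint {α : Type*} [DecidableEq α] {Ws Ys : Finset α}
    {M : List (α × α × α)} {G : ℕ → Finset α} (hcard : Ws.card = Ys.card)
    (hMY : ∀ m ∈ M, m.2.2 ∈ Ys) (hG : (range M.length : Set ℕ).PairwiseDisjoint G)
    (hY : ∀ y ∈ Ys, ∃ j, ∃ hj : j < M.length, M[j].2.2 = y ∧ y ∈ G j)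
    (hWX : ∀ j (hj : j < M.length), M[j].2.2 ∈ G j → M[j].1 ∈ G j ∧ M[j].2.1 ∈ G j) :
    HasMatching Ws M := by
  classical
  have huniq : ∀ {i j : ℕ}, i < M.length → j < M.length → ∀ d, d ∈ G i → d ∈ G j → i = j :=
    fun hi hj => hG.elim_finset (by simpa using hi) (by simpa using hj)
  set M' := M.toFinset.filter fun m => ∃ j, ∃ hj : j < M.length, M[j] = m ∧ m.2.2 ∈ G j
  have hM' : ∀ {m}, m ∈ M' ↔ ∃ j, ∃ hj : j < M.length, M[j] = m ∧ m.2.2 ∈ G j := by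
    intro m
    simp only [M', mem_filter, List.mem_toFinset, and_iff_right_iff_imp]
    rintro ⟨j, hj, rfl, -⟩
    exact List.getElem_mem hj
  refine ⟨M', fun m hm => ?_, ?_, ?_⟩
  · obtain ⟨j, hj, rfl, -⟩ := hM'.1 hm
    exact List.getElem_mem hj
  · rw [hcard]
    refine card_bij (fun m _ => m.2.2) (fun m hm => ?_) (fun m₁ hm₁ m₂ hm₂ h => ?_) fun y hy => ?_
    · obtain ⟨j, hj, rfl, -⟩ := hM'.1 hm
      exact hMY _ (List.getElem_mem hj)
    · obtain ⟨j₁, hj₁, rfl, hG₁⟩ := hM'.1 hm₁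
      obtain ⟨j₂, hj₂, rfl, hG₂⟩ := hM'.1 hm₂
      obtain rfl := huniq hj₁ hj₂ _ hG₁ (h ▸ hG₂)
      rfl
    · obtain ⟨j, hj, rfl, hGj⟩ := hY y hy
      exact ⟨M[j], hM'.2 ⟨j, hj, rfl, hGj⟩, rfl⟩
  · intro m₁ hm₁ m₂ hm₂ hne
    obtain ⟨j₁, hj₁, rfl, hG₁⟩ := hM'.1 hm₁
    obtain ⟨j₂, hj₂, rfl, hG₂⟩ := hM'.1 hm₂
    have hj : j₁ ≠ j₂ := by rintro rfl; exact hne rfl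
    obtain ⟨hw₁, hx₁⟩ := hWX j₁ hj₁ hG₁
    obtain ⟨hw₂, hx₂⟩ := hWX j₂ hj₂ hG₂
    exact ⟨fun h => hj (huniq hj₁ hj₂ _ hw₁ (h ▸ hw₂)),
      fun h => hj (huniq hj₁ hj₂ _ hx₁ (h ▸ hx₂)), fun h => hj (huniq hj₁ hj₂ _ hG₁ (h ▸ hG₂))⟩

section Election

variable {α : Type*} [DecidableEq α] {Ws Xs Ys : Finset α} {M : List (α × α × α)} {c s t : α}
  {V W : List (List α)}

theorem TDMOK.nodup_triple (hok : TDMOK Ws Xs Ys M c s t) {m : α × α × α} (hm : m ∈ M) :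
    [s, c, m.1, m.2.1, m.2.2, t].Nodup := by
  obtain ⟨-, -, -, hWX, hWY, hXY, -, -, hM, -, -, hcU, hsU, htU, hcs, hct, hst⟩ := hok
  obtain ⟨hw, hx, hy⟩ := hM m hm
  simp only [List.nodup_cons, List.mem_cons, List.not_mem_nil, List.nodup_nil, mem_union,
    not_or] at *
  and_intros
  all_goals grind [Finset.disjoint_left]

theorem TDMOK.card_union_union (hok : TDMOK Ws Xs Ys M c s t) :
    #(Ws ∪ Xs ∪ Ys) = 3 * #Ws := by
  obtain ⟨-, -, -, hWX, hWY, hXY, hX, hY, -⟩ := hok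
  rw [card_union_of_disjoint (disjoint_union_left.2 ⟨hWY, hXY⟩), card_union_of_disjoint hWX]
  omega

theorem IsTDMElection.length_eq (hel : IsTDMElection Ws Xs Ys M c s t V) :
    V.length = M.length + (M.length - 1) := by
  obtain ⟨V₁, V₂, rfl, hV₂, ⟨hV₁, -⟩, -⟩ := hel
  rw [List.length_append, hV₁, hV₂]

theorem IsTDMElection.isTripleVoter_getD (hel : IsTDMElection Ws Xs Ys M c s t V) {j : ℕ}
    (hj : j < M.length) :
    IsTripleVoter (TDMCands Ws Xs Ys c s t) c s t M[j].1 M[j].2.1 M[j].2.2 (j % 2 == 0)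
      (V.getD j []) := by
  obtain ⟨V₁, V₂, rfl, -, ⟨hV₁, htriple⟩, -⟩ := hel
  have hj₁ : j < V₁.length := hV₁ ▸ hj
  rw [List.getD_append _ _ _ _ hj₁, List.getD_eq_getElem _ _ hj₁]
  simpa using htriple ⟨j, hj₁⟩

theorem IsTDMElection.isTopVoter_getD (hel : IsTDMElection Ws Xs Ys M c s t V) {j : ℕ}
    (hj : M.length ≤ j) (hjV : j < V.length) :
    IsTopVoter (TDMCands Ws Xs Ys c s t) c (V.getD j []) := by
  obtain ⟨V₁, V₂, rfl, -, ⟨hV₁, -⟩, htop⟩ := hel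
  rw [List.getD_append_right _ _ _ _ (hV₁ ▸ hj)]
  rw [List.length_append] at hjV
  rw [List.getD_eq_getElem _ _ (by omega)]
  exact htop _ (List.getElem_mem _)

theorem IsTDMElection.mem_getD (hel : IsTDMElection Ws Xs Ys M c s t V) {j : ℕ}
    (hj : j < V.length) : c ∈ V.getD j [] := by
  rcases lt_or_ge j M.length with hjM | hjM
  · obtain ⟨R, -, -, hv⟩ := hel.isTripleVoter_getD hjM
    rw [hv]
    split <;> simp
  · obtain ⟨R, -, -, hv⟩ := hel.isTopVoter_getD hjM hj
    rw [hv]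
    simp

theorem IsTDMElection.exists_gains (hok : TDMOK Ws Xs Ys M c s t)
    (hel : IsTDMElection Ws Xs Ys M c s t V) (hlen : V.length = W.length)
    (hwin : CondorcetWinner (TDMCands Ws Xs Ys c s t) W c) {d : α} (hd : d ∈ Ws ∪ Xs ∪ Ys) :
    ∃ j < M.length, Gains (V.getD j []) (W.getD j []) c d := by
  have hnd := fun m (hm : m ∈ M) => hok.nodup_triple hm
  obtain ⟨-, -, -, -, -, -, -, -, -, -, -, hcU, hsU, htU, -, -, -⟩ := hok
  by_contra! hno
  have hsub : {j ∈ range W.length | prefers (W.getD j []) c d} ⊆ Ico M.length V.length := by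
    intro j hj
    rw [mem_filter, mem_range] at hj
    refine mem_Ico.2 ⟨not_lt.1 fun hjM => hno j hjM ⟨?_, hj.2⟩, hlen ▸ hj.1⟩
    exact (hel.isTripleVoter_getD hjM).not_prefers (hnd _ (List.getElem_mem hjM))
      (by rintro rfl; exact hsU hd) (by rintro rfl; exact htU hd)
  have hwin_d := hwin.2 d (mem_union_left _ hd) (by rintro rfl; exact hcU hd)
  rw [numPrefer_eq_card] at hwin_d
  have hcard := card_le_card hsub
  rw [Nat.card_Ico] at hcard
  have := hel.length_eq
  omega

def gainSet (V W : List (List α)) (U : Finset α) (c : α) (j : ℕ) : Finset α :=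
  U.filter (Gains (V.getD j []) (W.getD j []) c)

/-- With only `3q` switches available and `3q` candidates of `W ∪ X ∪ Y` to overtake, each
switch must be one where `c` overtakes one of them, and each of them is overtaken only once. -/
theorem IsTDMElection.discordantPairs_and_pairwiseDisjoint (hok : TDMOK Ws Xs Ys M c s t)
    (hel : IsTDMElection Ws Xs Ys M c s t V) (hreach : Reach SwitchProfile (3 * #Ws) V W)
    (hwin : CondorcetWinner (TDMCands Ws Xs Ys c s t) W c) :
    (∀ j < M.length, ∀ p ∈ discordantPairs (V.getD j []) (W.getD j []),
      p.1 = c ∧ p.2 ∈ Ws ∪ Xs ∪ Ys) ∧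
    (range M.length : Set ℕ).PairwiseDisjoint (gainSet V W (Ws ∪ Xs ∪ Ys) c) := by
  have hgains := fun d (hd : d ∈ Ws ∪ Xs ∪ Ys) => hel.exists_gains hok hreach.length_eq hwin hd
  have hcard := hok.card_union_union
  obtain ⟨-, -, -, -, -, -, -, -, -, -, -, hcU, -⟩ := hok
  have hsum : ∑ j ∈ range M.length, #(discordantPairs (V.getD j []) (W.getD j [])) ≤
      #(Ws ∪ Xs ∪ Ys) := by
    calc _ ≤ profileDiscordance V W :=
          sum_le_sum_of_subset (range_subset_range.2 (by rw [hel.length_eq]; omega))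
      _ ≤ 3 * #Ws := hreach.profileDiscordance_le
      _ = _ := hcard.symm
  obtain ⟨hDG, hdisj⟩ := image_eq_and_pairwiseDisjoint_of_sum_card_le
    (Prod.mk_right_injective c)
    (fun j hj => image_subset_iff.2 fun d hd => mk_mem_discordantPairs_of_gains
      (hel.mem_getD (by have := mem_range.1 hj; rw [hel.length_eq]; omega))
      (by rintro rfl; exact hcU (mem_filter.1 hd).1) (mem_filter.1 hd).2)
    (fun d hd => mem_biUnion.2 <| by
      obtain ⟨j, hj, hg⟩ := hgains d hd
      exact ⟨j, mem_range.2 hj, mem_filter.2 ⟨hd, hg⟩⟩) hsum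
  refine ⟨fun j hj p hp => ?_, hdisj⟩
  rw [← hDG j (mem_range.2 hj)] at hp
  obtain ⟨d, hd, rfl⟩ := mem_image.1 hp
  exact ⟨rfl, (mem_filter.1 hd).1⟩

theorem IsTDMElection.getElem_snd_snd_eq_of_prefers (hok : TDMOK Ws Xs Ys M c s t)
    (hel : IsTDMElection Ws Xs Ys M c s t V) {j : ℕ} (hj : j < M.length)
    (hD : ∀ p ∈ discordantPairs (V.getD j []) (W.getD j []), p.1 = c ∧ p.2 ∈ Ws ∪ Xs ∪ Ys)
    {y : α} (hy : y ∈ Ys) (hcy : prefers (W.getD j []) c y) : M[j].2.2 = y := by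
  have hnd := hok.nodup_triple (List.getElem_mem hj)
  obtain ⟨-, -, -, hWX, hWY, hXY, -, -, hM, -, -, hcU, hsU, htU, -⟩ := hok
  obtain ⟨hw, hx, -⟩ := hM _ (List.getElem_mem hj)
  by_contra hne
  refine (hel.isTripleVoter_getD hj).not_prefers_of_discordantPairs hnd hD hsU htU
    (mem_union_left _ (mem_union_right _ hy)) ?_ hcy
  simp only [Finset.mem_insert, Finset.mem_singleton, not_or]
  refine ⟨?_, ?_, ?_, ?_, fun h => hne h.symm, ?_⟩ <;> rintro rfl
  exacts [hsU (mem_union_right _ hy), hcU (mem_union_right _ hy),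
    disjoint_left.1 hWY hw hy, disjoint_left.1 hXY hx hy, htU (mem_union_right _ hy)]

theorem IsTDMElection.mem_gainSet_of_snd_snd_mem (hok : TDMOK Ws Xs Ys M c s t)
    (hel : IsTDMElection Ws Xs Ys M c s t V) {j : ℕ} (hj : j < M.length)
    (hD : ∀ p ∈ discordantPairs (V.getD j []) (W.getD j []), p.1 = c)
    (hyj : M[j].2.2 ∈ gainSet V W (Ws ∪ Xs ∪ Ys) c j) :
    M[j].1 ∈ gainSet V W (Ws ∪ Xs ∪ Ys) c j ∧ M[j].2.1 ∈ gainSet V W (Ws ∪ Xs ∪ Ys) c j := by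
  obtain ⟨hgw, hgx⟩ := (hel.isTripleVoter_getD hj).gains_of_prefers
    (hok.nodup_triple (List.getElem_mem hj)) hD (mem_filter.1 hyj).2.2
  obtain ⟨-, -, -, -, -, -, -, -, hM, -⟩ := hok
  obtain ⟨hw, hx, -⟩ := hM _ (List.getElem_mem hj)
  exact ⟨mem_filter.2 ⟨by simp [hw], hgw⟩, mem_filter.2 ⟨by simp [hx], hgx⟩⟩

end Election

/-- In the election from a 3DM instance with `||M|| > 1` and
`q = ||W||`, if the Dodgson score of `c` equals `3q` then `M` contains a
matching. -/
theorem tdm_score_implies_matching {α : Type*} [DecidableEq α]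
    (Ws Xs Ys : Finset α) (M : List (α × α × α)) (c s t : α)
    (V : List (List α))
    (hok : TDMOK Ws Xs Ys M c s t)
    (hel : IsTDMElection Ws Xs Ys M c s t V)
    (hscore : DodgsonScore (TDMCands Ws Xs Ys c s t) V c = 3 * Ws.card) :
    HasMatching Ws M := by
  have ⟨hW, _, _, _, _, _, _, hcardY, hM, _⟩ := hok
  obtain ⟨Wf, hreach, hwin⟩ :=
    exists_reach_of_dodgsonScore_eq hscore (by have := hW.card_pos; omega)
  obtain ⟨hD, hdisj⟩ := hel.discordantPairs_and_pairwiseDisjoint hok hreach hwin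
  refine hasMatching_of_pairwiseDisjoint hcardY (fun m hm => (hM m hm).2.2) hdisj
    (fun y hy => ?_) fun j hj => hel.mem_gainSet_of_snd_snd_mem hok hj fun p hp => (hD j hj p hp).1
  obtain ⟨j, hj, hg⟩ := hel.exists_gains hok hreach.length_eq hwin (mem_union_right _ hy)
  exact ⟨j, hj, hel.getElem_snd_snd_eq_of_prefers hok hj (hD j hj) hy hg.2,
    mem_filter.2 ⟨mem_union_right _ hy, hg⟩⟩
end
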